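/- Let A, P ∈ ℝ^{n×n}, i, i' ∈ [n], and suppose (a) max_{a,b} |(1/n)(AAᵀ)_{ab} − (1/n)(PPᵀ)_{ab}| ≤ ε, (b) there exist nodes ĩ, ĩ' with P_{ĩ·} = P_{i·} and P_{ĩ'·} = P_{i'·}, and (c) d(i,i') := max_{k≠i,i'} |(1/n)(AAᵀ)_{ik} − (1/n)(AAᵀ)_{i'k}| ≤ 2ε, with ĩ ≠ i,i' and ĩ' ≠ i,i'. Then (1/n)‖P_{i·} − P_{i'·}‖₂² ≤ 8ε. -/

import Mathlib

/-!
Expanding the square, `‖P_{i·} - P_{i'·}‖²` is a combination of the Gram entries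
`(PPᵀ)_{ii}, (PPᵀ)_{i'i}, (PPᵀ)_{i'i'}, (PPᵀ)_{ii'}`. The diagonal-type entries cannot be
compared with `AAᵀ` through the dissimilarity `d(i,i')`, which excludes the columns `i, i'`;
but the duplicated rows `ĩ, ĩ'` let us move every column index to `ĩ` or `ĩ'`. Each of the two
resulting differences of `PPᵀ` entries is within `ε + 2ε + ε` of the corresponding `AAᵀ`
difference, which is controlled by `d(i,i')`.
-/

open Matrix

namespace Matrix

variable {ι κ R : Type*} [Fintype κ] [CommRing R]

theorem mul_transpose_self_apply_eq_of_row_eq (P : Matrix ι κ R) {b c : ι}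
    (h : ∀ k, P b k = P c k) (a : ι) : (P * Pᵀ) a b = (P * Pᵀ) a c := by
  simp only [mul_apply, transpose_apply, h]

theorem sum_sq_sub_eq_mul_transpose_self (P : Matrix ι κ R) (i i' : ι) :
    ∑ j, (P i j - P i' j) ^ 2 =
      ((P * Pᵀ) i i - (P * Pᵀ) i' i) + ((P * Pᵀ) i' i' - (P * Pᵀ) i i') := by
  simp only [mul_apply, transpose_apply, ← Finset.sum_sub_distrib, ← Finset.sum_add_distrib]
  exact Finset.sum_congr rfl fun j _ => by ring

end Matrix

theorem abs_sub_le_of_abs_sub_le_of_abs_sub_le {α : Type*} [AddCommGroup α] [LinearOrder α]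
    [IsOrderedAddMonoid α] {x x' y y' ε δ : α} (hx : |y - x| ≤ ε) (hx' : |y' - x'| ≤ ε)
    (hy : |y - y'| ≤ δ) : |x - x'| ≤ ε + δ + ε := by
  calc |x - x'| = |(x - y) + (y - y') + (y' - x')| := by abel_nf
    _ ≤ |x - y| + |y - y'| + |y' - x'| := abs_add_three _ _ _
    _ ≤ ε + δ + ε := by rw [abs_sub_comm x y]; gcongr

/-- Key deterministic step: if (a) all entries of `(1/n)AAᵀ` are within `ε` of those of
`(1/n)PPᵀ`, (b) there are nodes `ĩ ≠ i,i'` and `ĩ' ≠ i,i'` with `P_{ĩ·} = P_{i·}` and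
`P_{ĩ'·} = P_{i'·}`, and (c) the observed dissimilarity
`d(i,i') = max_{k≠i,i'} |(1/n)(AAᵀ)_{ik} − (1/n)(AAᵀ)_{i'k}|` is at most `2ε`, then
`(1/n)‖P_{i·} − P_{i'·}‖₂² ≤ 8ε`. -/
theorem row_proximity (n : ℕ) (A P : Matrix (Fin n) (Fin n) ℝ) (i i' : Fin n) (ε : ℝ)
    (hAP : ∀ a b, |(1 / (n : ℝ)) * (A * Aᵀ) a b - (1 / (n : ℝ)) * (P * Pᵀ) a b| ≤ ε)
    (itil itil' : Fin n)
    (hitil : itil ≠ i ∧ itil ≠ i') (hitil' : itil' ≠ i ∧ itil' ≠ i')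
    (hrow : ∀ k, P itil k = P i k) (hrow' : ∀ k, P itil' k = P i' k)
    (hd : ∀ k, k ≠ i → k ≠ i' →
      |(1 / (n : ℝ)) * (A * Aᵀ) i k - (1 / (n : ℝ)) * (A * Aᵀ) i' k| ≤ 2 * ε) :
    (1 / (n : ℝ)) * ∑ j, (P i j - P i' j) ^ 2 ≤ 8 * ε := by
  have hgram : ∀ k, k ≠ i → k ≠ i' →
      |(1 / (n : ℝ)) * (P * Pᵀ) i k - (1 / (n : ℝ)) * (P * Pᵀ) i' k| ≤ ε + 2 * ε + ε :=
    fun k hk hk' => abs_sub_le_of_abs_sub_le_of_abs_sub_le (hAP i k) (hAP i' k) (hd k hk hk')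
  have h₁ := (le_abs_self _).trans (hgram itil hitil.1 hitil.2)
  have h₂ := (neg_le_abs _).trans (hgram itil' hitil'.1 hitil'.2)
  rw [P.sum_sq_sub_eq_mul_transpose_self,
    ← P.mul_transpose_self_apply_eq_of_row_eq hrow i,
    ← P.mul_transpose_self_apply_eq_of_row_eq hrow i',
    ← P.mul_transpose_self_apply_eq_of_row_eq hrow' i',
    ← P.mul_transpose_self_apply_eq_of_row_eq hrow' i]
  linarith
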